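/- Fix real numbers a, b with ab ≠ 0 and σ > 0, P > 0, γ > 0, and let 𝒞(x) := (1/2)log(1+x). Define C₅₀ := sup over τ, θ ∈ ℝ^{50}_{≥0} (indexed j = 0,…,49), λ̄ ∈ ℂ^{49} with Σ_{j=0}^{49} τ_j = 1, Σ_{j=0}^{49} θ_j = 1, θ_j = 0 whenever τ_j = 0, and Σ_{j=1}^{49} |λ̄_j|²(a²θ_j P + τ_j σ²) ≤ γP, of τ₀·𝒞(θ₀P/(τ₀σ²)) + Σ_{j=1}^{49} τ_j·𝒞((θ_j/τ_j)·(P/σ²)·|1+abλ̄_j|²/(1+b²|λ̄_j|²)) (terms with τ_j = 0 taken as 0). Define C₈ analogously as the sup over τ, θ ∈ ℝ^{8}_{≥0} (indexed j = 0,…,7), λ̄ ∈ ℝ^{7} with Σ_{j=0}^{7} τ_j = 1, Σ_{j=0}^{7} θ_j = 1, θ_j = 0 whenever τ_j = 0, and Σ_{j=1}^{7} λ̄_j²(a²θ_j P + τ_j σ²) ≤ γP, of τ₀·𝒞(θ₀P/(τ₀σ²)) + Σ_{j=1}^{7} τ_j·𝒞((θ_j/τ_j)·(P/σ²)·(1+abλ̄_j)²/(1+b²λ̄_j²)).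 Then C₅₀ = C₈. -/

import Mathlib

/-!
A time-sharing of transmission modes is a convex combination of the per-bandwidth triples
(rate, source power, relay power) of its modes, the direct mode being the relay mode with gain `0`.
By Carathéodory's theorem in `ℝ³`, such a combination needs at most four modes, so every rate
achievable with many real-gain modes is already achievable with seven. A complex gain `λ` can be
replaced by a real gain `t` with `t ^ 2 ≤ ‖λ‖ ^ 2` and the same effective gain factor
`|1 + ab λ|² / (1 + b² |λ|²)`: as `Re λ` ranges over `[-|λ|, |λ|]` the numerator stays between
its values at `λ = ±|λ|`, and the intermediate value theorem applies to the real factor on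
`[-|λ|, |λ|]`. So the two sets of achievable rates are equal, not just their suprema.
-/

open Finset

theorem exists_fin_convex_combination_of_mem_convexHull {𝕜 E : Type*} [Field 𝕜] [LinearOrder 𝕜]
    [IsStrictOrderedRing 𝕜] [AddCommGroup E] [Module 𝕜 E] [FiniteDimensional 𝕜 E] {s : Set E}
    {x : E} (hx : x ∈ convexHull 𝕜 s) {m : ℕ} (hm : Module.finrank 𝕜 E < m) :
    ∃ (w : Fin m → 𝕜) (y : Fin m → E), (∀ i, 0 ≤ w i) ∧ ∑ i, w i = 1 ∧ (∀ i, y i ∈ s) ∧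
      ∑ i, w i • y i = x := by
  obtain ⟨x₀, hx₀⟩ := convexHull_nonempty_iff.1 ⟨x, hx⟩
  obtain ⟨ι, _, z, w, hzs, hz, hw, hws, rfl⟩ := eq_pos_convex_span_of_mem_convexHull hx
  have hcard : Fintype.card ι ≤ m :=
    hz.card_le_finrank_succ.trans
      (by linarith [Submodule.finrank_le (vectorSpan 𝕜 (Set.range z))])
  let e : ι ↪ Fin m := (Fintype.equivFin ι).toEmbedding.trans (Fin.castLEEmb hcard)
  refine ⟨Function.extend e w 0, Function.extend e z fun _ => x₀, fun i => ?_, ?_, fun i => ?_,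
    ?_⟩
  · by_cases hi : ∃ j, e j = i
    · obtain ⟨j, rfl⟩ := hi
      simpa [e.injective.extend_apply] using (hw j).le
    · simp [Function.extend_apply' _ _ _ hi]
  · rw [← hws]
    refine (Fintype.sum_of_injective e e.injective _ _ (fun i hi => ?_)
      fun j => (e.injective.extend_apply w 0 j).symm).symm
    simp [Function.extend_apply' _ _ _ (by simpa using hi)]
  · by_cases hi : ∃ j, e j = i
    · obtain ⟨j, rfl⟩ := hi
      simpa [e.injective.extend_apply] using hzs (Set.mem_range_self j)
    · simpa [Function.extend_apply' _ _ _ hi] using hx₀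
  · refine (Fintype.sum_of_injective e e.injective _ _ (fun i hi => ?_) fun j => ?_).symm
    · simp [Function.extend_apply' _ _ _ (by simpa using hi)]
    · simp [e.injective.extend_apply]

theorem Complex.sq_norm_one_add_ofReal_mul (c : ℝ) (l : ℂ) :
    ‖1 + (c : ℂ) * l‖ ^ 2 = 1 + 2 * c * l.re + c ^ 2 * ‖l‖ ^ 2 := by
  simp only [Complex.sq_norm, Complex.normSq_apply, Complex.add_re, Complex.add_im,
    Complex.mul_re, Complex.mul_im, Complex.ofReal_re, Complex.ofReal_im, Complex.one_re,
    Complex.one_im]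
  ring

theorem exists_real_gain (c b : ℝ) (l : ℂ) :
    ∃ t : ℝ, t ^ 2 ≤ ‖l‖ ^ 2 ∧
      (1 + c * t) ^ 2 / (1 + b ^ 2 * t ^ 2) =
        ‖1 + (c : ℂ) * l‖ ^ 2 / (1 + b ^ 2 * ‖l‖ ^ 2) := by
  set r := ‖l‖
  have hr : -r ≤ r := neg_le_self (norm_nonneg l)
  have hcont :
      ContinuousOn (fun t : ℝ => (1 + c * t) ^ 2 / (1 + b ^ 2 * t ^ 2)) (Set.uIcc (-r) r) :=
    (Continuous.continuousOn (by fun_prop)).div (Continuous.continuousOn (by fun_prop))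
      fun t _ => by positivity
  have hmem : ‖1 + (c : ℂ) * l‖ ^ 2 / (1 + b ^ 2 * r ^ 2) ∈
      Set.uIcc ((1 + c * -r) ^ 2 / (1 + b ^ 2 * (-r) ^ 2))
        ((1 + c * r) ^ 2 / (1 + b ^ 2 * r ^ 2)) := by
    have hre := abs_le.1 (Complex.abs_re_le_norm l)
    rw [neg_sq, Complex.sq_norm_one_add_ofReal_mul, Set.mem_uIcc]
    rcases le_total c 0 with hc | hc
    · right; constructor <;> gcongr <;> nlinarith
    · left; constructor <;> gcongr <;> nlinarith
  obtain ⟨t, ht, hft⟩ := intermediate_value_uIcc hcont hmem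
  rw [Set.uIcc_of_le hr] at ht
  exact ⟨t, sq_le_sq' ht.1 ht.2, hft⟩

noncomputable def gaussianCapacity (x : ℝ) : ℝ := (1 / 2) * Real.log (1 + x)

noncomputable def relayRate (a b σ P p t : ℝ) : ℝ :=
  gaussianCapacity (p * (P / σ ^ 2) * (1 + a * b * t) ^ 2 / (1 + b ^ 2 * t ^ 2))

def realModeRates (a b σ P γ : ℝ) (n : ℕ) : Set ℝ :=
  {x | ∃ (τ θ : Fin (n + 1) → ℝ) (lb : Fin n → ℝ),
    (∀ j, 0 ≤ τ j) ∧ (∀ j, 0 ≤ θ j) ∧ (∑ j, τ j = 1) ∧ (∑ j, θ j = 1) ∧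
    (∀ j, τ j = 0 → θ j = 0) ∧
    (∑ j : Fin n, lb j ^ 2 * (a ^ 2 * θ j.succ * P + τ j.succ * σ ^ 2) ≤ γ * P) ∧
    x = τ 0 * gaussianCapacity (θ 0 * P / (τ 0 * σ ^ 2))
      + ∑ j : Fin n, τ j.succ * relayRate a b σ P (θ j.succ / τ j.succ) (lb j)}

def complexModeRates (a b σ P γ : ℝ) (n : ℕ) : Set ℝ :=
  {x | ∃ (τ θ : Fin (n + 1) → ℝ) (lb : Fin n → ℂ),
    (∀ j, 0 ≤ τ j) ∧ (∀ j, 0 ≤ θ j) ∧ (∑ j, τ j = 1) ∧ (∑ j, θ j = 1) ∧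
    (∀ j, τ j = 0 → θ j = 0) ∧
    (∑ j : Fin n, ‖lb j‖ ^ 2 * (a ^ 2 * θ j.succ * P + τ j.succ * σ ^ 2) ≤ γ * P) ∧
    x = τ 0 * gaussianCapacity (θ 0 * P / (τ 0 * σ ^ 2))
      + ∑ j : Fin n, τ j.succ * gaussianCapacity (θ j.succ / τ j.succ * (P / σ ^ 2)
          * ‖1 + ((a * b : ℝ) : ℂ) * lb j‖ ^ 2 / (1 + b ^ 2 * ‖lb j‖ ^ 2))}

/-- A mode with source power `p` and relay gain `t`, as (rate, source power, relay power) per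
unit bandwidth. -/
noncomputable def modePoint (a b σ P p t : ℝ) : Fin 3 → ℝ :=
  ![relayRate a b σ P p t, p, t ^ 2 * (a ^ 2 * p * P + σ ^ 2)]

def modePoints (a b σ P : ℝ) : Set (Fin 3 → ℝ) :=
  {v | ∃ p t, 0 ≤ p ∧ modePoint a b σ P p t = v}

section

variable {a b σ P γ : ℝ} {n m : ℕ}

theorem complexModeRates_subset_realModeRates (hP : 0 ≤ P) :
    complexModeRates a b σ P γ n ⊆ realModeRates a b σ P γ n := by
  rintro x ⟨τ, θ, lb, hτ, hθ, hτs, hθs, hτθ, hpow, rfl⟩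
  choose t ht hgain using fun j => exists_real_gain (a * b) b (lb j)
  refine ⟨τ, θ, t, hτ, hθ, hτs, hθs, hτθ, le_trans (sum_le_sum fun j _ => ?_) hpow, ?_⟩
  · have := hθ j.succ
    have := hτ j.succ
    exact mul_le_mul_of_nonneg_right (ht j) (by positivity)
  · simp only [relayRate, mul_div_assoc, hgain]

theorem realModeRates_subset_complexModeRates :
    realModeRates a b σ P γ n ⊆ complexModeRates a b σ P γ n := by
  rintro x ⟨τ, θ, lb, hτ, hθ, hτs, hθs, hτθ, hpow, rfl⟩
  have hnorm (t : ℝ) : ‖1 + ((a * b : ℝ) : ℂ) * t‖ ^ 2 = (1 + a * b * t) ^ 2 := by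
    rw [← Complex.ofReal_one, ← Complex.ofReal_mul, ← Complex.ofReal_add, Complex.norm_real,
      Real.norm_eq_abs, sq_abs]
  refine ⟨τ, θ, fun j => lb j, hτ, hθ, hτs, hθs, hτθ, ?_, ?_⟩
  · simpa only [Complex.norm_real, Real.norm_eq_abs, sq_abs] using hpow
  · simp only [relayRate, hnorm, Complex.norm_real, Real.norm_eq_abs, sq_abs]

@[simp] theorem modePoint_zero (p t : ℝ) : modePoint a b σ P p t 0 = relayRate a b σ P p t := rfl
@[simp] theorem modePoint_one (p t : ℝ) : modePoint a b σ P p t 1 = p := rfl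
@[simp] theorem modePoint_two (p t : ℝ) :
    modePoint a b σ P p t 2 = t ^ 2 * (a ^ 2 * p * P + σ ^ 2) := rfl

theorem relayRate_zero_gain (p : ℝ) :
    relayRate a b σ P p 0 = gaussianCapacity (p * (P / σ ^ 2)) := by
  simp [relayRate]

theorem exists_mem_convexHull_of_mem_realModeRates {x : ℝ} (hx : x ∈ realModeRates a b σ P γ n) :
    ∃ z ∈ convexHull ℝ (modePoints a b σ P), z 0 = x ∧ z 1 = 1 ∧ z 2 ≤ γ * P := by
  obtain ⟨τ, θ, lb, hτ, hθ, hτs, hθs, hτθ, hpow, rfl⟩ := hx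
  have hθτ (j) : τ j * (θ j / τ j) = θ j := by
    rcases eq_or_ne (τ j) 0 with h | h
    · simp [h, hτθ j h]
    · exact mul_div_cancel₀ _ h
  refine ⟨∑ j, τ j • modePoint a b σ P (θ j / τ j) ((Fin.cons 0 lb : Fin (n + 1) → ℝ) j),
    ?_, ?_, ?_, ?_⟩
  · exact (convex_convexHull ℝ _).sum_mem (fun j _ => hτ j) hτs
      fun j _ => subset_convexHull ℝ _ ⟨_, _, div_nonneg (hθ j) (hτ j), rfl⟩
  · simp only [Finset.sum_apply, Pi.smul_apply, smul_eq_mul, Fin.sum_univ_succ, modePoint_zero,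
      Fin.cons_zero, Fin.cons_succ, relayRate_zero_gain, div_mul_div_comm]
  · simp only [Finset.sum_apply, Pi.smul_apply, smul_eq_mul, modePoint_one, hθτ, hθs]
  · simp only [Finset.sum_apply, Pi.smul_apply, smul_eq_mul, Fin.sum_univ_succ, modePoint_two,
      Fin.cons_zero, Fin.cons_succ, zero_pow two_ne_zero, zero_mul, mul_zero, zero_add]
    refine le_of_eq_of_le ?_ hpow
    exact sum_congr rfl fun j _ => by linear_combination lb j ^ 2 * a ^ 2 * P * hθτ j.succ

theorem mem_realModeRates_of_mem_convexHull {z : Fin 3 → ℝ}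
    (hz : z ∈ convexHull ℝ (modePoints a b σ P)) (h1 : z 1 = 1) (h2 : z 2 ≤ γ * P) (hm : 3 < m) :
    z 0 ∈ realModeRates a b σ P γ m := by
  obtain ⟨w, y, hw, hws, hy, rfl⟩ :=
    exists_fin_convex_combination_of_mem_convexHull hz (by simpa using hm)
  choose q t hq hyqt using hy
  obtain rfl : y = fun k => modePoint a b σ P (q k) (t k) := funext fun k => (hyqt k).symm
  simp only [Finset.sum_apply, Pi.smul_apply, smul_eq_mul, modePoint_one, modePoint_two] at h1 h2
  refine ⟨Fin.cons 0 w, Fin.cons 0 fun k => w k * q k, t, Fin.cases le_rfl hw,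
    Fin.cases le_rfl fun k => mul_nonneg (hw k) (hq k), by simpa [Fin.sum_cons] using hws,
    by simpa [Fin.sum_cons] using h1, Fin.cases (fun _ => rfl) fun k hk => ?_, ?_, ?_⟩
  · refine le_of_eq_of_le (sum_congr rfl fun k _ => ?_) h2
    simp only [Fin.cons_succ]
    ring
  · simp only [Finset.sum_apply, Pi.smul_apply, smul_eq_mul, modePoint_zero, Fin.cons_zero,
      Fin.cons_succ, zero_mul, zero_add]
    refine sum_congr rfl fun k _ => ?_
    rcases eq_or_ne (w k) 0 with h | h
    · simp [h]
    · rw [mul_div_cancel_left₀ _ h]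
  · simp only [Fin.cons_succ] at hk ⊢
    rw [hk, zero_mul]

theorem realModeRates_subset (hm : 3 < m) :
    realModeRates a b σ P γ n ⊆ realModeRates a b σ P γ m := fun _ hx =>
  let ⟨_, hz, h0, h1, h2⟩ := exists_mem_convexHull_of_mem_realModeRates hx
  h0 ▸ mem_realModeRates_of_mem_convexHull hz h1 h2 hm

end

theorem fifty_modes_eq_eight_modes_general (a b : ℝ) (σ P γ : ℝ) (hP : 0 < P) :
    sSup {x : ℝ |
      ∃ (τ θ : Fin 50 → ℝ) (lb : Fin 49 → ℂ),
        (∀ j, 0 ≤ τ j) ∧ (∀ j, 0 ≤ θ j) ∧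
        (∑ j, τ j = 1) ∧ (∑ j, θ j = 1) ∧
        (∀ j, τ j = 0 → θ j = 0) ∧
        (∑ j : Fin 49, ‖lb j‖ ^ 2 * (a ^ 2 * θ j.succ * P + τ j.succ * σ ^ 2) ≤ γ * P) ∧
        x = τ 0 * ((1 / 2) * Real.log (1 + θ 0 * P / (τ 0 * σ ^ 2)))
          + ∑ j : Fin 49, τ j.succ * ((1 / 2) * Real.log
              (1 + (θ j.succ / τ j.succ) * (P / σ ^ 2)
                * ‖1 + ((a * b : ℝ) : ℂ) * lb j‖ ^ 2 / (1 + b ^ 2 * ‖lb j‖ ^ 2)))}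
    = sSup {x : ℝ |
      ∃ (τ θ : Fin 8 → ℝ) (lb : Fin 7 → ℝ),
        (∀ j, 0 ≤ τ j) ∧ (∀ j, 0 ≤ θ j) ∧
        (∑ j, τ j = 1) ∧ (∑ j, θ j = 1) ∧
        (∀ j, τ j = 0 → θ j = 0) ∧
        (∑ j : Fin 7, (lb j) ^ 2 * (a ^ 2 * θ j.succ * P + τ j.succ * σ ^ 2) ≤ γ * P) ∧
        x = τ 0 * ((1 / 2) * Real.log (1 + θ 0 * P / (τ 0 * σ ^ 2)))
          + ∑ j : Fin 7, τ j.succ * ((1 / 2) * Real.log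
              (1 + (θ j.succ / τ j.succ) * (P / σ ^ 2)
                * (1 + a * b * lb j) ^ 2 / (1 + b ^ 2 * (lb j) ^ 2)))} := by
  change sSup (complexModeRates a b σ P γ 49) = sSup (realModeRates a b σ P γ 7)
  congr 1
  apply Set.Subset.antisymm
  · exact (complexModeRates_subset_realModeRates hP.le).trans (realModeRates_subset (by norm_num))
  · exact (realModeRates_subset (by norm_num)).trans realModeRates_subset_complexModeRates

/-- The 50-mode capacity expression of Theorem 2 (complex amplify-and-forward
gains) coincides with the 8-mode expression of Corollary 1 (real gains) for real
channel coefficients with `ab ≠ 0`. -/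
theorem fifty_modes_eq_eight_modes (a b : ℝ) (hab : a * b ≠ 0) (σ P γ : ℝ)
    (hσ : 0 < σ) (hP : 0 < P) (hγ : 0 < γ) :
    sSup {x : ℝ |
      ∃ (τ θ : Fin 50 → ℝ) (lb : Fin 49 → ℂ),
        (∀ j, 0 ≤ τ j) ∧ (∀ j, 0 ≤ θ j) ∧
        (∑ j, τ j = 1) ∧ (∑ j, θ j = 1) ∧
        (∀ j, τ j = 0 → θ j = 0) ∧
        (∑ j : Fin 49, ‖lb j‖ ^ 2 * (a ^ 2 * θ j.succ * P + τ j.succ * σ ^ 2) ≤ γ * P) ∧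
        x = τ 0 * ((1 / 2) * Real.log (1 + θ 0 * P / (τ 0 * σ ^ 2)))
          + ∑ j : Fin 49, τ j.succ * ((1 / 2) * Real.log
              (1 + (θ j.succ / τ j.succ) * (P / σ ^ 2)
                * ‖1 + ((a * b : ℝ) : ℂ) * lb j‖ ^ 2 / (1 + b ^ 2 * ‖lb j‖ ^ 2)))}
    = sSup {x : ℝ |
      ∃ (τ θ : Fin 8 → ℝ) (lb : Fin 7 → ℝ),
        (∀ j, 0 ≤ τ j) ∧ (∀ j, 0 ≤ θ j) ∧
        (∑ j, τ j = 1) ∧ (∑ j, θ j = 1) ∧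
        (∀ j, τ j = 0 → θ j = 0) ∧
        (∑ j : Fin 7, (lb j) ^ 2 * (a ^ 2 * θ j.succ * P + τ j.succ * σ ^ 2) ≤ γ * P) ∧
        x = τ 0 * ((1 / 2) * Real.log (1 + θ 0 * P / (τ 0 * σ ^ 2)))
          + ∑ j : Fin 7, τ j.succ * ((1 / 2) * Real.log
              (1 + (θ j.succ / τ j.succ) * (P / σ ^ 2)
                * (1 + a * b * lb j) ^ 2 / (1 + b ^ 2 * (lb j) ^ 2)))} :=
  fifty_modes_eq_eight_modes_general a b σ P γ hP
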